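/- Let R be a commutative ring, n ≥ 1, and 1 ≤ k ≤ k'. Then the ideal quotient (J_{k'} : ξ^{k'−k}) in A = R[ξ₁,…,ξₙ] equals J_k; equivalently, the A-linear map A/J_k → A/J_{k'} induced by multiplication by ξ^{k'−k} is injective. -/
import Mathlib

open MvPolynomial

lemma mem_Jk_iff {R : Type} [CommRing R] {n : ℕ} (k : ℕ) (f : MvPolynomial (Fin n) R) :
    f ∈ Ideal.span (Set.range fun i : Fin n => (X i : MvPolynomial (Fin n) R) ^ k) ↔
      ∀ d ∈ f.support, ∃ i, k ≤ d i := by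
  have himg : (Set.range fun i : Fin n => (X i : MvPolynomial (Fin n) R) ^ k) =
      (fun s => monomial s (1 : R)) '' (Set.range fun i : Fin n => Finsupp.single i k) := by
    rw [← Set.range_comp]
    refine congrArg Set.range (funext fun i => ?_)
    simp [Function.comp, X_pow_eq_monomial]
  rw [himg, mem_ideal_span_monomial_image]
  refine forall₂_congr fun d _ => ?_
  constructor
  · rintro ⟨s, ⟨i, rfl⟩, hs⟩
    exact ⟨i, by simpa using (Finsupp.single_le_iff.mp hs)⟩
  · rintro ⟨i, hi⟩
    exact ⟨Finsupp.single i k, ⟨i, rfl⟩, Finsupp.single_le_iff.mpr hi⟩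

/-- Let `R` be a commutative ring, `n ≥ 1` and `1 ≤ k ≤ k'`.  Write
`J_k = (ξ₁^k, …, ξₙ^k) ⊆ A = R[ξ₁,…,ξₙ]` and `ξ = ξ₁⋯ξₙ`.  Then the ideal quotient
`(J_{k'} : ξ^{k'−k})` equals `J_k`; equivalently, the `A`-linear map `A/J_k → A/J_{k'}`
induced by multiplication by `ξ^{k'−k}` is injective. -/
theorem colon_pow_prod_X_eq (R : Type) [CommRing R] (n : ℕ) (hn : 1 ≤ n) (k k' : ℕ)
    (hk : 1 ≤ k) (hkk' : k ≤ k') :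
    (Ideal.span (Set.range fun i : Fin n => (X i : MvPolynomial (Fin n) R) ^ k')).colon
        (Ideal.span {(∏ i : Fin n, (X i : MvPolynomial (Fin n) R)) ^ (k' - k)}) =
      Ideal.span (Set.range fun i : Fin n => (X i : MvPolynomial (Fin n) R) ^ k) ∧
    ∀ h : Ideal.span (Set.range fun i : Fin n => (X i : MvPolynomial (Fin n) R) ^ k) ≤
        Submodule.comap
          (LinearMap.lsmul (MvPolynomial (Fin n) R) (MvPolynomial (Fin n) R)
            ((∏ i : Fin n, (X i : MvPolynomial (Fin n) R)) ^ (k' - k)))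
          (Ideal.span (Set.range fun i : Fin n => (X i : MvPolynomial (Fin n) R) ^ k')),
      Function.Injective
        (Submodule.mapQ
          (Ideal.span (Set.range fun i : Fin n => (X i : MvPolynomial (Fin n) R) ^ k))
          (Ideal.span (Set.range fun i : Fin n => (X i : MvPolynomial (Fin n) R) ^ k'))
          (LinearMap.lsmul (MvPolynomial (Fin n) R) (MvPolynomial (Fin n) R)
            ((∏ i : Fin n, (X i : MvPolynomial (Fin n) R)) ^ (k' - k))) h) := by
  set e := k' - k with he
  have hke : k + e = k' := Nat.add_sub_cancel' hkk'
  set ξ : MvPolynomial (Fin n) R := ∏ i : Fin n, X i with hξ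
  -- ξ^e as a monomial
  set c : Fin n →₀ ℕ := ∑ i : Fin n, Finsupp.single i e with hc
  have hξe : ξ ^ e = monomial c (1 : R) := by
    rw [hξ, ← Finset.prod_pow]
    simp_rw [X_pow_eq_monomial]
    rw [hc]
    rw [monomial_sum_index]
    · simp
  have hci : ∀ i : Fin n, c i = e := by
    intro i
    rw [hc]
    rw [Finsupp.finset_sum_apply]
    rw [Finset.sum_eq_single i]
    · simp
    · intro b _ hb; simp [Finsupp.single_apply, hb]
    · simp
  have key : ∀ f : MvPolynomial (Fin n) R,
      ξ ^ e * f ∈ Ideal.span (Set.range fun i : Fin n => (X i : MvPolynomial (Fin n) R) ^ k') ↔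
      f ∈ Ideal.span (Set.range fun i : Fin n => (X i : MvPolynomial (Fin n) R) ^ k) := by
    intro f
    constructor
    · intro hf
      rw [mem_Jk_iff] at hf ⊢
      intro d hd
      have hmem : c + d ∈ (ξ ^ e * f).support := by
        rw [MvPolynomial.mem_support_iff, hξe, coeff_monomial_mul, one_mul]
        exact MvPolynomial.mem_support_iff.mp hd
      obtain ⟨i, hi⟩ := hf _ hmem
      refine ⟨i, ?_⟩
      have : (c + d) i = e + d i := by simp [hci i]
      omega
    · intro hf
      rw [mul_comm]
      refine Submodule.span_induction ?_ ?_ ?_ ?_ hf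
      · rintro x ⟨i, rfl⟩
        have : (X i : MvPolynomial (Fin n) R) ^ k * ξ ^ e =
            (∏ j ∈ Finset.univ.erase i, (X j : MvPolynomial (Fin n) R) ^ e) * X i ^ k' := by
          rw [hξ, ← Finset.prod_pow, ← Finset.mul_prod_erase _ _ (Finset.mem_univ i)]
          rw [← hke, pow_add]
          ring
        rw [this]
        exact Ideal.mul_mem_left _ _ (Ideal.subset_span ⟨i, rfl⟩)
      · simp
      · intro x y _ _ hx hy
        rw [add_mul]; exact Ideal.add_mem _ hx hy
      · intro a x _ hx
        rw [smul_eq_mul, mul_assoc]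
        exact Ideal.mul_mem_left _ _ hx
  constructor
  · ext f
    rw [Ideal.mem_colon_span_singleton, mul_comm, key f]
  · intro h
    rw [← LinearMap.ker_eq_bot, eq_bot_iff]
    rintro x hx
    obtain ⟨f, rfl⟩ := Submodule.Quotient.mk_surjective _ x
    rw [LinearMap.mem_ker, Submodule.mapQ_apply, LinearMap.lsmul_apply,
      Submodule.Quotient.mk_eq_zero] at hx
    rw [Submodule.mem_bot, Submodule.Quotient.mk_eq_zero]
    exact (key f).mp (by simpa [smul_eq_mul] using hx)
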